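/- Let α, h, K be positive real constants. Then α·x − 1 + e^{−αx} > 0 for every x > 0; the map ψ(x) := K·α² / (h·(α·x − 1 + e^{−αx})) is a continuous, strictly decreasing bijection from (0,∞) onto (0,∞); and for every x > 0, x is the unique solution in (0,∞) of the equation (ψ(x)·h/α)·(1 − e^{−αy}) = ψ(x)·h·y − K·α (in the unknown y), i.e. x = x_{ψ(x)}. -/

import Mathlib

/-- The bijection `ψ(x) = K·α² / (h·(α·x - 1 + e^{-αx}))` between thresholds and
Lagrange multipliers in the fluid-queue example. -/
noncomputable def psi (α h K x : ℝ) : ℝ :=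
  K * α ^ 2 / (h * (α * x - 1 + Real.exp (-α * x)))

/-!
Everything reduces to `E(t) = t - 1 + e^{-t}` (`expGap`), since `ψ(x) = Kα² / (h·E(αx))`.
The inequality `e^{-d} > 1 - d` for `d ≠ 0` makes `E` positive away from `0` and strictly
increasing on `[0, ∞)`; with `E(0) = 0`, `E(t + 1) ≥ t` and the intermediate value theorem,
`E` is a bijection of `(0, ∞)`, and `ψ` inherits all its properties. Multiplying the
threshold equation by `α / (ψ(x)·h)` turns it into `E(αy) = Kα² / (ψ(x)·h) = E(αx)`.
-/

open Set

noncomputable def expGap (t : ℝ) : ℝ := t - 1 + Real.exp (-t)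

lemma expGap_zero : expGap 0 = 0 := by simp [expGap]

lemma continuous_expGap : Continuous expGap := by unfold expGap; fun_prop

lemma expGap_pos {t : ℝ} (ht : t ≠ 0) : 0 < expGap t := by
  have := Real.add_one_lt_exp (neg_ne_zero.mpr ht)
  unfold expGap; linarith

lemma strictMonoOn_expGap : StrictMonoOn expGap (Ici 0) := by
  intro a ha b _ hab
  have hlin := Real.add_one_lt_exp (neg_ne_zero.mpr (sub_ne_zero.mpr hab.ne'))
  have hshrink : Real.exp (-(b - a)) < 1 := Real.exp_lt_one_iff.mpr (by linarith)
  have hexp_a : Real.exp (-a) ≤ 1 := Real.exp_le_one_iff.mpr (by simpa using ha)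
  have hsplit : Real.exp (-b) = Real.exp (-a) * Real.exp (-(b - a)) := by
    rw [← Real.exp_add]; ring_nf
  have hdrop : Real.exp (-a) * (1 - Real.exp (-(b - a))) < b - a :=
    calc Real.exp (-a) * (1 - Real.exp (-(b - a))) ≤ 1 - Real.exp (-(b - a)) :=
          mul_le_of_le_one_left (by linarith) hexp_a
      _ < b - a := by linarith
  unfold expGap; rw [hsplit]; linarith

lemma le_expGap_add_one (t : ℝ) : t ≤ expGap (t + 1) := by
  have := Real.exp_pos (-(t + 1))
  unfold expGap; linarith

lemma bijOn_expGap : BijOn expGap (Ioi 0) (Ioi 0) := by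
  refine ⟨fun t ht => expGap_pos ht.ne', strictMonoOn_expGap.injOn.mono Ioi_subset_Ici_self,
    fun s hs => ?_⟩
  have hs : 0 < s := hs
  obtain ⟨t, ht, hts⟩ := intermediate_value_Icc (by linarith : (0 : ℝ) ≤ s + 1)
    continuous_expGap.continuousOn ⟨by rw [expGap_zero]; exact hs.le, le_expGap_add_one s⟩
  refine ⟨t, lt_of_le_of_ne ht.1 ?_, hts⟩
  rintro rfl
  rw [expGap_zero] at hts
  exact hs.ne hts

lemma psi_eq (α h K x : ℝ) : psi α h K x = K * α ^ 2 / (h * expGap (α * x)) := by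
  rw [psi, expGap, neg_mul]

lemma threshold_equation_iff {α g h K : ℝ} (hα : α ≠ 0) (hg : g ≠ 0) (hh : h ≠ 0) (y : ℝ) :
    g * h / α * (1 - Real.exp (-α * y)) = g * h * y - K * α ↔
      expGap (α * y) = K * α ^ 2 / (g * h) := by
  rw [expGap, eq_div_iff (mul_ne_zero hg hh), div_mul_eq_mul_div, div_eq_iff hα, neg_mul]
  constructor <;> intro heq <;> linear_combination (-1 : ℝ) * heq

section Psi

variable {α h K : ℝ}

lemma expGap_mul_pos (hα : 0 < α) {x : ℝ} (hx : 0 < x) : 0 < expGap (α * x) :=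
  expGap_pos (mul_pos hα hx).ne'

lemma strictMonoOn_expGap_mul (hα : 0 < α) : StrictMonoOn (fun x => expGap (α * x)) (Ioi 0) :=
  fun _ ha _ hb hab => strictMonoOn_expGap (mul_pos hα ha).le (mul_pos hα hb).le
    (mul_lt_mul_of_pos_left hab hα)

lemma psi_pos (hα : 0 < α) (hh : 0 < h) (hK : 0 < K) {x : ℝ} (hx : 0 < x) :
    0 < psi α h K x := by
  rw [psi_eq]
  exact div_pos (by positivity) (mul_pos hh (expGap_mul_pos hα hx))

lemma continuousOn_psi (hα : 0 < α) (hh : 0 < h) : ContinuousOn (psi α h K) (Ioi 0) := by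
  rw [show psi α h K = _ from funext (psi_eq α h K)]
  exact continuousOn_const.div
    (continuousOn_const.mul (continuous_expGap.comp (continuous_const_mul α)).continuousOn)
    fun x hx => (mul_pos hh (expGap_mul_pos hα hx)).ne'

lemma strictAntiOn_psi (hα : 0 < α) (hh : 0 < h) (hK : 0 < K) :
    StrictAntiOn (psi α h K) (Ioi 0) := fun a ha b hb hab => by
  simp only [psi_eq]
  exact div_lt_div_of_pos_left (by positivity) (mul_pos hh (expGap_mul_pos hα ha))
    (mul_lt_mul_of_pos_left (strictMonoOn_expGap_mul hα ha hb hab) hh)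

lemma surjOn_psi (hα : 0 < α) (hh : 0 < h) (hK : 0 < K) :
    SurjOn (psi α h K) (Ioi 0) (Ioi 0) := fun g hg => by
  have hg : 0 < g := hg
  obtain ⟨t, ht, hts⟩ := bijOn_expGap.surjOn
    (mem_Ioi.mpr (by positivity : 0 < K * α ^ 2 / (h * g)))
  refine ⟨t / α, div_pos ht hα, ?_⟩
  rw [psi_eq, mul_div_cancel₀ t hα.ne', hts]
  field_simp

lemma psi_threshold_equation_iff (hα : 0 < α) (hh : 0 < h) (hK : 0 < K) {x : ℝ} (hx : 0 < x)
    (y : ℝ) :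
    (0 < y ∧ psi α h K x * h / α * (1 - Real.exp (-α * y)) = psi α h K x * h * y - K * α) ↔
      y = x := by
  have hx_gap : K * α ^ 2 / (psi α h K x * h) = expGap (α * x) := by
    rw [psi_eq]; field_simp [(expGap_mul_pos hα hx).ne']
  rw [threshold_equation_iff hα.ne' (psi_pos hα hh hK hx).ne' hh.ne', hx_gap]
  exact ⟨fun ⟨hy, heq⟩ => (strictMonoOn_expGap_mul hα).injOn hy hx heq,
    by rintro rfl; exact ⟨hx, rfl⟩⟩

end Psi

/-- Let `α, h, K > 0`.  Then `α·x - 1 + e^{-αx} > 0` for every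
`x > 0`; the map `ψ(x) = K·α²/(h·(αx - 1 + e^{-αx}))` is a continuous, strictly
decreasing bijection from `(0,∞)` onto `(0,∞)`; and for every `x > 0`, `x` is the
unique solution `y ∈ (0,∞)` of `(ψ(x)·h/α)(1 - e^{-αy}) = ψ(x)·h·y - K·α`,
i.e. `x = x_{ψ(x)}`. -/
theorem stmt14 (α h K : ℝ) (hα : 0 < α) (hh : 0 < h) (hK : 0 < K) :
    (∀ x : ℝ, 0 < x → 0 < α * x - 1 + Real.exp (-α * x)) ∧
    ContinuousOn (psi α h K) (Set.Ioi 0) ∧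
    StrictAntiOn (psi α h K) (Set.Ioi 0) ∧
    Set.BijOn (psi α h K) (Set.Ioi 0) (Set.Ioi 0) ∧
    ∀ x : ℝ, 0 < x → ∀ y : ℝ,
      (0 < y ∧
        psi α h K x * h / α * (1 - Real.exp (-α * y)) = psi α h K x * h * y - K * α)
      ↔ y = x :=
  ⟨fun x hx => by simpa only [expGap, neg_mul] using expGap_mul_pos hα hx,
    continuousOn_psi hα hh,
    strictAntiOn_psi hα hh hK,
    ⟨fun _ hx => psi_pos hα hh hK hx, (strictAntiOn_psi hα hh hK).injOn, surjOn_psi hα hh hK⟩,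
    fun _ hx => psi_threshold_equation_iff hα hh hK hx⟩
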